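/- For all extended-real failure times A, B, C: A Δ (B + C) = (A Δ B)·(B ⊴ C) + (A Δ C)·(C ⊴ B). -/

import Mathlib

noncomputable def dAND (A B : EReal) : EReal := max A B
noncomputable def dOR (A B : EReal) : EReal := min A B
noncomputable def dBEFORE (A B : EReal) : EReal := if A < B then A else ⊤
noncomputable def dIBEFORE (A B : EReal) : EReal := if A ≤ B then A else ⊤
noncomputable def dSIMULT (A B : EReal) : EReal := if A = B then A else ⊤
noncomputable def NEVER : EReal := ⊤

/-!
Both sides are symmetric under swapping `B` and `C`, so we may assume `B ≤ C`. Then `B + C = B`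
and `B ⊴ C = B`, and `(A Δ B)·B = A Δ B` because `A Δ B` is either `B` or `+∞`. The second
summand is `+∞` unless `C = B`, in which case it coincides with the first.
-/

theorem dOR_comm (A B : EReal) : dOR A B = dOR B A := min_comm A B

theorem dOR_of_le {A B : EReal} (h : A ≤ B) : dOR A B = A := min_eq_left h

theorem dOR_top_right (A : EReal) : dOR A ⊤ = A := min_top_right A

theorem dAND_top_right (A : EReal) : dAND A ⊤ = ⊤ := max_top_right A

theorem dIBEFORE_of_le {A B : EReal} (h : A ≤ B) : dIBEFORE A B = A := if_pos h

theorem dIBEFORE_of_lt {A B : EReal} (h : B < A) : dIBEFORE A B = ⊤ := if_neg h.not_ge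

theorem dAND_dSIMULT_self_right (A B : EReal) : dAND (dSIMULT A B) B = dSIMULT A B := by
  unfold dAND dSIMULT
  split_ifs with h
  · rw [h, max_self]
  · exact max_eq_left le_top

theorem simult_or_of_le (A : EReal) {B C : EReal} (h : B ≤ C) :
    dSIMULT A (dOR B C) =
      dOR (dAND (dSIMULT A B) (dIBEFORE B C)) (dAND (dSIMULT A C) (dIBEFORE C B)) := by
  rw [dOR_of_le h, dIBEFORE_of_le h, dAND_dSIMULT_self_right]
  rcases h.eq_or_lt with rfl | hlt
  · rw [dIBEFORE_of_le le_rfl, dAND_dSIMULT_self_right, dOR_of_le le_rfl]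
  · rw [dIBEFORE_of_lt hlt, dAND_top_right, dOR_top_right]

theorem simult_or (A B C : EReal) :
    dSIMULT A (dOR B C) =
      dOR (dAND (dSIMULT A B) (dIBEFORE B C)) (dAND (dSIMULT A C) (dIBEFORE C B)) := by
  rcases le_total B C with h | h
  · exact simult_or_of_le A h
  · rw [dOR_comm B, dOR_comm (dAND _ _)]
    exact simult_or_of_le A h
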